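/- arXiv:math/0702432 — 4 statements merged into one kernel-verified Lean document; each statement's English description precedes it below -/
import Mathlib

section
/- For every nontrivial measurable set S ⊆ ℝ there exists a point p ∈ ℝ that is a 1/4-exceptional point for S. -/
open MeasureTheory Set Filter

/-- The relative measure of `H` in the interval `(p - ε, p + ε)`,
i.e. `λ(H ∩ I_ε(p)) / (2ε)`. -/
noncomputable def relMeasure (H : Set ℝ) (p ε : ℝ) : ℝ :=
  (volume (H ∩ Ioo (p - ε) (p + ε))).toReal / (2 * ε)

/-- `p` is a `δ`-exceptional point for `S` if
`δ ≤ liminf_{ε→0⁺} λ(S ∩ I_ε(p))/(2ε)` and `limsup_{ε→0⁺} λ(S ∩ I_ε(p))/(2ε) ≤ 1 - δ`. -/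
def IsExceptionalPoint (S : Set ℝ) (δ p : ℝ) : Prop :=
  δ ≤ liminf (fun ε => relMeasure S p ε) (nhdsWithin 0 (Ioi 0)) ∧
  limsup (fun ε => relMeasure S p ε) (nhdsWithin 0 (Ioi 0)) ≤ 1 - δ

/-- A set `S ⊆ ℝ` is nontrivial if both `S` and its complement have positive measure. -/
def NontrivialSet (S : Set ℝ) : Prop := 0 < volume S ∧ 0 < volume Sᶜ


namespace QEPaux

lemma vol_Ioc_ne_top (S : Set ℝ) (p q : ℝ) : volume (S ∩ Ioc p q) ≠ ⊤ := by
  refine ((measure_mono inter_subset_right).trans_lt ?_).ne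
  rw [Real.volume_Ioc]; exact ENNReal.ofReal_lt_top

lemma vol_Ioo_ne_top (S : Set ℝ) (p q : ℝ) : volume (S ∩ Ioo p q) ≠ ⊤ := by
  refine ((measure_mono inter_subset_right).trans_lt ?_).ne
  rw [Real.volume_Ioo]; exact ENNReal.ofReal_lt_top

lemma vol_Ioc_toReal_le (S : Set ℝ) {p q : ℝ} (h : p ≤ q) :
    (volume (S ∩ Ioc p q)).toReal ≤ q - p := by
  refine ENNReal.toReal_le_of_le_ofReal (by linarith) ?_
  rw [← Real.volume_Ioc]; exact measure_mono inter_subset_right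

lemma compl_Ioc (S : Set ℝ) (hS : MeasurableSet S) {p q : ℝ} (h : p ≤ q) :
    (volume (Sᶜ ∩ Ioc p q)).toReal = (q - p) - (volume (S ∩ Ioc p q)).toReal := by
  have key := measure_inter_add_diff (μ := volume) (Ioc p q) hS
  have h1 : Ioc p q \ S = Sᶜ ∩ Ioc p q := by ext x; simp [And.comm, Set.diff_eq, Set.inter_comm]
  rw [h1, Set.inter_comm, Real.volume_Ioc] at key
  have := congrArg ENNReal.toReal key
  rw [ENNReal.toReal_add (vol_Ioc_ne_top S p q) (vol_Ioc_ne_top Sᶜ p q),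
    ENNReal.toReal_ofReal (by linarith)] at this
  linarith

lemma compl_Ioo (S : Set ℝ) (hS : MeasurableSet S) {p q : ℝ} (h : p ≤ q) :
    (volume (Sᶜ ∩ Ioo p q)).toReal = (q - p) - (volume (S ∩ Ioo p q)).toReal := by
  have key := measure_inter_add_diff (μ := volume) (Ioo p q) hS
  have h1 : Ioo p q \ S = Sᶜ ∩ Ioo p q := by ext x; simp [And.comm, Set.diff_eq, Set.inter_comm]
  rw [h1, Set.inter_comm, Real.volume_Ioo] at key
  have := congrArg ENNReal.toReal key
  rw [ENNReal.toReal_add (vol_Ioo_ne_top S p q) (vol_Ioo_ne_top Sᶜ p q),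
    ENNReal.toReal_ofReal (by linarith)] at this
  linarith

/-- One-sided lower bounds at a Lebesgue density point. -/
lemma density_onesided (S : Set ℝ) (x : ℝ)
    (hx : Tendsto (fun r => volume (S ∩ Metric.closedBall x r) / volume (Metric.closedBall x r))
      (nhdsWithin 0 (Ioi 0)) (nhds 1)) :
    (∀ᶠ ε in nhdsWithin (0:ℝ) (Ioi 0), ε/2 < (volume (S ∩ Ioc x (x+ε))).toReal) ∧
    (∀ᶠ ε in nhdsWithin (0:ℝ) (Ioi 0), ε/2 < (volume (S ∩ Ioc (x-ε) x)).toReal) := by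
  have h9 : ∀ᶠ r in nhdsWithin (0:ℝ) (Ioi 0),
      ENNReal.ofReal (9/10) < volume (S ∩ Metric.closedBall x r) / volume (Metric.closedBall x r) :=
    hx.eventually_const_lt (by
      rw [← ENNReal.ofReal_one]
      exact (ENNReal.ofReal_lt_ofReal_iff (by norm_num)).mpr (by norm_num))
  have key : ∀ᶠ r in nhdsWithin (0:ℝ) (Ioi 0),
      ENNReal.ofReal (9/10 * (2*r)) < volume (S ∩ Icc (x-r) (x+r)) := by
    filter_upwards [h9, self_mem_nhdsWithin] with r hr (hr0 : 0 < r)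
    rw [Real.closedBall_eq_Icc] at hr
    have hvol : volume (Icc (x-r) (x+r)) = ENNReal.ofReal (2*r) := by
      rw [Real.volume_Icc]; ring_nf
    rw [hvol, ENNReal.lt_div_iff_mul_lt (Or.inl (by simp [hr0.le]; positivity))
      (Or.inl ENNReal.ofReal_ne_top)] at hr
    calc ENNReal.ofReal (9/10 * (2*r)) = ENNReal.ofReal (9/10) * ENNReal.ofReal (2*r) := by
          rw [ENNReal.ofReal_mul (by norm_num)]
      _ < _ := hr
  constructor
  · filter_upwards [key, self_mem_nhdsWithin] with r hr (hr0 : 0 < r)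
    by_contra hcon
    push_neg at hcon
    have hfin := vol_Ioc_ne_top S x (x+r)
    have hle : volume (S ∩ Ioc x (x+r)) ≤ ENNReal.ofReal (r/2) := by
      rw [← ENNReal.ofReal_toReal hfin]
      exact ENNReal.ofReal_le_ofReal hcon
    have hsub : S ∩ Icc (x-r) (x+r) ⊆ (S ∩ Icc (x-r) x) ∪ (S ∩ Ioc x (x+r)) := by
      rintro y ⟨hyS, hy1, hy2⟩
      by_cases hyx : y ≤ x
      · exact Or.inl ⟨hyS, hy1, hyx⟩
      · exact Or.inr ⟨hyS, lt_of_not_ge hyx, hy2⟩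
    have : ENNReal.ofReal (9/10 * (2*r)) < ENNReal.ofReal r + ENNReal.ofReal (r/2) := by
      calc ENNReal.ofReal (9/10 * (2*r)) < volume (S ∩ Icc (x-r) (x+r)) := hr
        _ ≤ volume (S ∩ Icc (x-r) x) + volume (S ∩ Ioc x (x+r)) :=
            (measure_mono hsub).trans (measure_union_le _ _)
        _ ≤ ENNReal.ofReal r + ENNReal.ofReal (r/2) := by
            refine add_le_add ?_ hle
            refine (measure_mono inter_subset_right).trans ?_
            rw [Real.volume_Icc]
            exact ENNReal.ofReal_le_ofReal (by linarith)
    rw [← ENNReal.ofReal_add (by linarith) (by linarith),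
      ENNReal.ofReal_lt_ofReal_iff (by linarith)] at this
    linarith
  · filter_upwards [key, self_mem_nhdsWithin] with r hr (hr0 : 0 < r)
    by_contra hcon
    push_neg at hcon
    have hfin := vol_Ioc_ne_top S (x-r) x
    have hle : volume (S ∩ Ioc (x-r) x) ≤ ENNReal.ofReal (r/2) := by
      rw [← ENNReal.ofReal_toReal hfin]
      exact ENNReal.ofReal_le_ofReal hcon
    have hsub : S ∩ Icc (x-r) (x+r) ⊆ (S ∩ Ioc (x-r) x) ∪ ((S ∩ Icc x (x+r)) ∪ {x-r}) := by
      rintro y ⟨hyS, hy1, hy2⟩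
      by_cases hyx : x ≤ y
      · exact Or.inr (Or.inl ⟨hyS, hyx, hy2⟩)
      · rcases eq_or_lt_of_le hy1 with h | h
        · exact Or.inr (Or.inr h.symm)
        · exact Or.inl ⟨hyS, h, le_of_not_ge hyx⟩
    have : ENNReal.ofReal (9/10 * (2*r)) < ENNReal.ofReal (r/2) + ENNReal.ofReal r := by
      calc ENNReal.ofReal (9/10 * (2*r)) < volume (S ∩ Icc (x-r) (x+r)) := hr
        _ ≤ volume (S ∩ Ioc (x-r) x) + (volume (S ∩ Icc x (x+r)) + volume {x-r}) :=
            (measure_mono hsub).trans ((measure_union_le _ _).trans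
              (add_le_add le_rfl (measure_union_le _ _)))
        _ ≤ ENNReal.ofReal (r/2) + ENNReal.ofReal r := by
            rw [Real.volume_singleton, add_zero]
            refine add_le_add hle ?_
            refine (measure_mono inter_subset_right).trans ?_
            rw [Real.volume_Icc]
            exact ENNReal.ofReal_le_ofReal (by linarith)
    rw [← ENNReal.ofReal_add (by linarith) (by linarith),
      ENNReal.ofReal_lt_ofReal_iff (by linarith)] at this
    linarith


noncomputable def Faux (S : Set ℝ) (a : ℝ) (p : ℝ) : ℝ :=
  (volume (S ∩ Ioc a p)).toReal - (p - a)/2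

lemma maxpoint (S : Set ℝ) (hS : MeasurableSet S) (a b : ℝ) (hab : a < b)
    (Ha : ∀ᶠ ε in nhdsWithin (0:ℝ) (Ioi 0), ε/2 < (volume (S ∩ Ioc a (a+ε))).toReal)
    (Hb : ∀ᶠ ε in nhdsWithin (0:ℝ) (Ioi 0), (volume (S ∩ Ioc (b-ε) b)).toReal < ε/2) :
    ∃ p : ℝ, ∀ᶠ ε in nhdsWithin (0:ℝ) (Ioi 0),
      ε/2 ≤ (volume (S ∩ Ioo (p-ε) (p+ε))).toReal ∧
      (volume (S ∩ Ioo (p-ε) (p+ε))).toReal ≤ 3*ε/2 := by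
  set F : ℝ → ℝ := Faux S a with hF
  -- additivity
  have key : ∀ p q : ℝ, a ≤ p → p ≤ q →
      F q - F p = (volume (S ∩ Ioc p q)).toReal - (q - p)/2 := by
    intro p q hap hpq
    have hsplit : volume (S ∩ Ioc a q) = volume (S ∩ Ioc a p) + volume (S ∩ Ioc p q) := by
      rw [← Ioc_union_Ioc_eq_Ioc hap hpq, Set.inter_union_distrib_left]
      exact measure_union ((Ioc_disjoint_Ioc_of_le le_rfl).mono inter_subset_right inter_subset_right)
        (hS.inter measurableSet_Ioc)
    have := congrArg ENNReal.toReal hsplit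
    rw [ENNReal.toReal_add (vol_Ioc_ne_top S a p) (vol_Ioc_ne_top S p q)] at this
    simp only [hF, Faux]
    rw [this]; ring
  have hbd : ∀ p q : ℝ, p ≤ q → 0 ≤ (volume (S ∩ Ioc p q)).toReal ∧
      (volume (S ∩ Ioc p q)).toReal ≤ q - p :=
    fun p q h => ⟨ENNReal.toReal_nonneg, vol_Ioc_toReal_le S h⟩
  -- continuity
  have cont : ContinuousOn F (Icc a b) := by
    refine (LipschitzOnWith.of_dist_le_mul (K := 1) ?_).continuousOn
    intro p hp q hq
    rcases le_total p q with h | h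
    · have h1 := key p q hp.1 h
      have h2 := hbd p q h
      have habs : |p - q| = q - p := by rw [abs_sub_comm]; exact abs_of_nonneg (by linarith)
      rw [Real.dist_eq, Real.dist_eq, NNReal.coe_one, one_mul, habs, abs_le]
      constructor <;> linarith [h2.1, h2.2]
    · have h1 := key q p hq.1 h
      have h2 := hbd q p h
      have habs : |p - q| = p - q := abs_of_nonneg (by linarith)
      rw [Real.dist_eq, Real.dist_eq, NNReal.coe_one, one_mul, habs, abs_le]
      constructor <;> linarith [h2.1, h2.2]
  obtain ⟨p, hpmem, hmax⟩ := isCompact_Icc.exists_isMaxOn (nonempty_Icc.mpr hab.le) cont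
  have hmax' : ∀ x ∈ Icc a b, F x ≤ F p := hmax
  have hFa : F a = 0 := by simp [hF, Faux]
  -- p ≠ a
  obtain ⟨εa, hεa1, hεa2⟩ := (Ha.and (Ioo_mem_nhdsGT_of_mem (by constructor <;> linarith :
      (0:ℝ) ∈ Ico 0 (b - a)))).exists
  have hpa : a < p := by
    have hmem : a + εa ∈ Icc a b := ⟨by linarith [hεa2.1], by linarith [hεa2.2]⟩
    have hk := key a (a + εa) le_rfl (by linarith [hεa2.1])
    have hk' : F (a + εa) - F a = (volume (S ∩ Ioc a (a + εa))).toReal - εa/2 := by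
      rw [hk]; ring_nf
    have hFp : F a < F p := by linarith [hmax' _ hmem, hεa1]
    rcases eq_or_lt_of_le hpmem.1 with h | h
    · exfalso; rw [← h] at hFp; linarith
    · exact h
  -- p ≠ b
  obtain ⟨εb, hεb1, hεb2⟩ := (Hb.and (Ioo_mem_nhdsGT_of_mem (by constructor <;> linarith :
      (0:ℝ) ∈ Ico 0 (b - a)))).exists
  have hpb : p < b := by
    have hmem : b - εb ∈ Icc a b := ⟨by linarith [hεb2.2], by linarith [hεb2.1]⟩
    have hk := key (b - εb) b (by linarith [hεb2.2]) (by linarith [hεb2.1])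
    have hk' : F b - F (b - εb) = (volume (S ∩ Ioc (b - εb) b)).toReal - εb/2 := by
      rw [hk]; ring_nf
    have hFp : F b < F p := by linarith [hmax' _ hmem, hεb1]
    rcases eq_or_lt_of_le hpmem.2 with h | h
    · exfalso; rw [h] at hFp; linarith
    · exact h
  refine ⟨p, ?_⟩
  filter_upwards [Ioo_mem_nhdsGT_of_mem (show (0:ℝ) ∈ Ico 0 (min (p - a) (b - p)) by
    exact ⟨le_refl 0, lt_min (by linarith) (by linarith)⟩)] with ε hε
  obtain ⟨hε0, hεlt⟩ := hε
  have hεa' : ε < p - a := lt_of_lt_of_le hεlt (min_le_left _ _)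
  have hεb' : ε < b - p := lt_of_lt_of_le hεlt (min_le_right _ _)
  -- upper one-sided bound
  have h1 := key p (p + ε) (by linarith) (by linarith)
  have h1' : F (p + ε) - F p = (volume (S ∩ Ioc p (p + ε))).toReal - ε/2 := by
    rw [h1]; ring_nf
  have hplus : (volume (S ∩ Ioc p (p + ε))).toReal ≤ ε/2 := by
    have := hmax' (p + ε) ⟨by linarith, by linarith⟩
    linarith
  have h2 := key (p - ε) p (by linarith) (by linarith)
  have h2' : F p - F (p - ε) = (volume (S ∩ Ioc (p - ε) p)).toReal - ε/2 := by
    rw [h2]; ring_nf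
  have hminus : ε/2 ≤ (volume (S ∩ Ioc (p - ε) p)).toReal := by
    have := hmax' (p - ε) ⟨by linarith, by linarith⟩
    linarith
  constructor
  · refine hminus.trans (ENNReal.toReal_mono (vol_Ioo_ne_top S _ _) (measure_mono ?_))
    exact inter_subset_inter_right _ (Ioc_subset_Ioo_right (by linarith))
  · have hsub : S ∩ Ioo (p - ε) (p + ε) ⊆ (S ∩ Ioc (p - ε) p) ∪ (S ∩ Ioc p (p + ε)) := by
      rintro y ⟨hyS, hy1, hy2⟩
      by_cases hyx : y ≤ p
      · exact Or.inl ⟨hyS, hy1, hyx⟩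
      · exact Or.inr ⟨hyS, lt_of_not_ge hyx, hy2.le⟩
    have hmono : (volume (S ∩ Ioo (p - ε) (p + ε))).toReal ≤
        (volume (S ∩ Ioc (p - ε) p)).toReal + (volume (S ∩ Ioc p (p + ε))).toReal := by
      rw [← ENNReal.toReal_add (vol_Ioc_ne_top S _ _) (vol_Ioc_ne_top S _ _)]
      refine ENNReal.toReal_mono ?_ ((measure_mono hsub).trans (measure_union_le _ _))
      exact ENNReal.add_ne_top.mpr ⟨vol_Ioc_ne_top S _ _, vol_Ioc_ne_top S _ _⟩
    have hb1 : (volume (S ∩ Ioc (p - ε) p)).toReal ≤ ε := by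
      have := vol_Ioc_toReal_le S (show p - ε ≤ p by linarith)
      linarith
    linarith


lemma isExceptional_of_bounds (S : Set ℝ) (p : ℝ)
    (h : ∀ᶠ ε in nhdsWithin (0:ℝ) (Ioi 0),
      ε/2 ≤ (volume (S ∩ Ioo (p-ε) (p+ε))).toReal ∧
      (volume (S ∩ Ioo (p-ε) (p+ε))).toReal ≤ 3*ε/2) :
    IsExceptionalPoint S (1/4) p := by
  have hbnd : ∀ᶠ ε in nhdsWithin (0:ℝ) (Ioi 0),
      1/4 ≤ relMeasure S p ε ∧ relMeasure S p ε ≤ 3/4 := by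
    filter_upwards [h, self_mem_nhdsWithin] with ε hε (hε0 : 0 < ε)
    have h2ε : 0 < 2 * ε := by linarith
    unfold relMeasure
    constructor
    · rw [le_div_iff₀ h2ε]; linarith [hε.1]
    · rw [div_le_iff₀ h2ε]; linarith [hε.2]
  constructor
  · refine le_liminf_of_le ?_ (hbnd.mono fun ε h => h.1)
    exact isCoboundedUnder_ge_of_eventually_le _ (hbnd.mono fun ε h => h.2)
  · rw [show (1:ℝ) - 1/4 = 3/4 by norm_num]
    refine limsup_le_of_le ?_ (hbnd.mono fun ε h => h.2)
    exact isCoboundedUnder_le_of_eventually_le _ (hbnd.mono fun ε h => h.1)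


end QEPaux

open QEPaux in
/-- Every nontrivial measurable set `S ⊆ ℝ` has a `1/4`-exceptional point. -/
theorem exists_quarter_exceptional_point (S : Set ℝ) (hS : MeasurableSet S)
    (hnt : NontrivialSet S) :
    ∃ p : ℝ, IsExceptionalPoint S (1 / 4) p := by
  obtain ⟨hS1, hS2⟩ := hnt
  have ha : ∃ a ∈ S, Tendsto
      (fun r => volume (S ∩ Metric.closedBall a r) / volume (Metric.closedBall a r))
      (nhdsWithin 0 (Ioi 0)) (nhds 1) := by
    have hae := Besicovitch.ae_tendsto_measure_inter_div_of_measurableSet volume hS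
    by_contra hcon
    push_neg at hcon
    have hsub : S ⊆ {x | ¬ Tendsto
        (fun r => volume (S ∩ Metric.closedBall x r) / volume (Metric.closedBall x r))
        (nhdsWithin 0 (Ioi 0)) (nhds (S.indicator 1 x))} := by
      intro x hx
      have hind : S.indicator (1 : ℝ → ENNReal) x = 1 := by
        rw [Set.indicator_of_mem hx]; rfl
      simp only [mem_setOf_eq, hind]
      exact hcon x hx
    have := (measure_mono hsub).trans_eq (ae_iff.mp hae)
    exact absurd (le_antisymm this zero_le) hS1.ne'
  have hb : ∃ b ∈ Sᶜ, Tendsto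
      (fun r => volume (Sᶜ ∩ Metric.closedBall b r) / volume (Metric.closedBall b r))
      (nhdsWithin 0 (Ioi 0)) (nhds 1) := by
    have hae := Besicovitch.ae_tendsto_measure_inter_div_of_measurableSet volume hS.compl
    by_contra hcon
    push_neg at hcon
    have hsub : Sᶜ ⊆ {x | ¬ Tendsto
        (fun r => volume (Sᶜ ∩ Metric.closedBall x r) / volume (Metric.closedBall x r))
        (nhdsWithin 0 (Ioi 0)) (nhds (Sᶜ.indicator 1 x))} := by
      intro x hx
      have hind : Sᶜ.indicator (1 : ℝ → ENNReal) x = 1 := by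
        rw [Set.indicator_of_mem hx]; rfl
      simp only [mem_setOf_eq, hind]
      exact hcon x hx
    have := (measure_mono hsub).trans_eq (ae_iff.mp hae)
    exact absurd (le_antisymm this zero_le) hS2.ne'
  obtain ⟨a, haS, hadens⟩ := ha
  obtain ⟨b, hbS, hbdens⟩ := hb
  obtain ⟨HaR, HaL⟩ := density_onesided S a hadens
  obtain ⟨HbR, HbL⟩ := density_onesided Sᶜ b hbdens
  have hne : a ≠ b := by
    intro h
    subst h
    obtain ⟨ε, ⟨h1, h2⟩, (hε0 : 0 < ε)⟩ := ((HaR.and HbR).and self_mem_nhdsWithin).exists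
    have hc := compl_Ioc S hS (show a ≤ a + ε by linarith)
    linarith
  rcases lt_or_gt_of_ne hne with hab | hba
  · have Hb' : ∀ᶠ ε in nhdsWithin (0:ℝ) (Ioi 0),
        (volume (S ∩ Ioc (b - ε) b)).toReal < ε/2 := by
      filter_upwards [HbL, self_mem_nhdsWithin] with ε hε (hε0 : 0 < ε)
      have hc := compl_Ioc S hS (show b - ε ≤ b by linarith)
      linarith
    obtain ⟨p, hp⟩ := maxpoint S hS a b hab HaR Hb'
    exact ⟨p, isExceptional_of_bounds S p hp⟩
  · have Ha' : ∀ᶠ ε in nhdsWithin (0:ℝ) (Ioi 0),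
        (volume (Sᶜ ∩ Ioc (a - ε) a)).toReal < ε/2 := by
      filter_upwards [HaL, self_mem_nhdsWithin] with ε hε (hε0 : 0 < ε)
      have hc := compl_Ioc S hS (show a - ε ≤ a by linarith)
      linarith
    obtain ⟨p, hp⟩ := maxpoint Sᶜ hS.compl b a hba HbR Ha'
    refine ⟨p, isExceptional_of_bounds S p ?_⟩
    filter_upwards [hp, self_mem_nhdsWithin] with ε hε (hε0 : 0 < ε)
    have hc := compl_Ioo S hS (show p - ε ≤ p + ε by linarith)
    exact ⟨by linarith [hε.2], by linarith [hε.1]⟩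
end

section
/- Let W ⊆ ℝ be measurable with (−∞,0) ⊆ W and W ∩ (1,∞) = ∅, and define f : ℝ → ℝ by f(x) = λ(W ∩ (x,∞)) + x/2. If p is a point at which f attains its global minimum, then for every ε > 0 one has 1/4 ≤ λ(W ∩ I_ε(p))/(2ε) ≤ 3/4. -/
open MeasureTheory Set Filter

private lemma vol_fin (W : Set ℝ) (hright : W ∩ Ioi (1 : ℝ) = ∅) (x : ℝ) :
    volume (W ∩ Ioi x) ≠ ⊤ := by
  have hsub : W ∩ Ioi x ⊆ Ioc x (max 1 x) := by
    rintro w ⟨hw, hx⟩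
    refine ⟨hx, le_max_iff.2 (Or.inl ?_)⟩
    by_contra h
    have : w ∈ W ∩ Ioi 1 := ⟨hw, lt_of_not_ge h⟩
    rw [hright] at this
    exact this
  exact ne_top_of_le_ne_top (by simp [Real.volume_Ioc]) (measure_mono hsub)

private lemma vol_split (W : Set ℝ) (hW : MeasurableSet W)
    (hright : W ∩ Ioi (1 : ℝ) = ∅) {x y : ℝ} (hxy : x ≤ y) :
    (volume (W ∩ Ioi x)).toReal
      = (volume (W ∩ Ioc x y)).toReal + (volume (W ∩ Ioi y)).toReal := by
  have hunion : W ∩ Ioi x = (W ∩ Ioc x y) ∪ (W ∩ Ioi y) := by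
    rw [← inter_union_distrib_left, Ioc_union_Ioi_eq_Ioi hxy]
  have hdisj : Disjoint (W ∩ Ioc x y) (W ∩ Ioi y) :=
    (Set.Ioc_disjoint_Ioi le_rfl).mono inter_subset_right inter_subset_right
  have hmeas : volume (W ∩ Ioi x) = volume (W ∩ Ioc x y) + volume (W ∩ Ioi y) := by
    rw [hunion, measure_union hdisj (hW.inter measurableSet_Ioi)]
  have h1 : volume (W ∩ Ioc x y) ≠ ⊤ :=
    ne_top_of_le_ne_top (vol_fin W hright x) (measure_mono (inter_subset_inter_right _ Ioc_subset_Ioi_self))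
  rw [hmeas, ENNReal.toReal_add h1 (vol_fin W hright y)]

/-- If `W ⊆ ℝ` is measurable with `(-∞,0) ⊆ W` and `W ∩ (1,∞) = ∅`, and the function
`f(x) = λ(W ∩ (x,∞)) + x/2` attains its global minimum at `p`, then for every `ε > 0`
the relative measure of `W` in `I_ε(p)` lies between `1/4` and `3/4`. -/
theorem relMeasure_of_min (W : Set ℝ) (hW : MeasurableSet W)
    (hleft : Iio (0 : ℝ) ⊆ W) (hright : W ∩ Ioi (1 : ℝ) = ∅) (p : ℝ)
    (hp : ∀ x : ℝ, (volume (W ∩ Ioi p)).toReal + p / 2 ≤ (volume (W ∩ Ioi x)).toReal + x / 2) :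
    ∀ ε > 0, 1 / 4 ≤ relMeasure W p ε ∧ relMeasure W p ε ≤ 3 / 4 := by
  intro ε hε
  set a := (volume (W ∩ Ioc (p - ε) p)).toReal with ha
  set b := (volume (W ∩ Ioc p (p + ε))).toReal with hb
  -- b ≤ ε/2
  have hsplit1 : (volume (W ∩ Ioi p)).toReal
      = b + (volume (W ∩ Ioi (p + ε))).toReal :=
    vol_split W hW hright (by linarith)
  have hbε : b ≤ ε / 2 := by
    have := hp (p + ε)
    rw [hsplit1] at this
    linarith
  -- ε/2 ≤ a
  have hsplit2 : (volume (W ∩ Ioi (p - ε))).toReal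
      = a + (volume (W ∩ Ioi p)).toReal :=
    vol_split W hW hright (by linarith)
  have haε : ε / 2 ≤ a := by
    have := hp (p - ε)
    rw [hsplit2] at this
    linarith
  -- a ≤ ε
  have haub : a ≤ ε := by
    have : volume (W ∩ Ioc (p - ε) p) ≤ volume (Ioc (p - ε) p) :=
      measure_mono inter_subset_right
    have h2 : volume (Ioc (p - ε) p) = ENNReal.ofReal ε := by
      rw [Real.volume_Ioc]; ring_nf
    calc a ≤ (volume (Ioc (p - ε) p)).toReal := by
            exact ENNReal.toReal_mono (by simp [h2]) this
      _ = ε := by rw [h2, ENNReal.toReal_ofReal hε.le]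
  -- decompose the Ioo
  have hooFin : volume (Ioo (p - ε) (p + ε)) ≠ ⊤ := by simp [Real.volume_Ioo]
  have hmFin : volume (W ∩ Ioo (p - ε) (p + ε)) ≠ ⊤ :=
    ne_top_of_le_ne_top hooFin (measure_mono inter_subset_right)
  set m := (volume (W ∩ Ioo (p - ε) (p + ε))).toReal with hm
  have hunion : W ∩ Ioo (p - ε) (p + ε) = (W ∩ Ioc (p - ε) p) ∪ (W ∩ Ioo p (p + ε)) := by
    rw [← inter_union_distrib_left, Ioc_union_Ioo_eq_Ioo (by linarith) (by linarith)]
  have hdisj : Disjoint (W ∩ Ioc (p - ε) p) (W ∩ Ioo p (p + ε)) := by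
    rw [Set.disjoint_left]
    rintro w ⟨_, _, h1⟩ ⟨_, h2, _⟩
    exact absurd h1 (not_le.2 h2)
  have haFin : volume (W ∩ Ioc (p - ε) p) ≠ ⊤ :=
    ne_top_of_le_ne_top hmFin (measure_mono (by rw [hunion]; exact subset_union_left))
  have hcFin : volume (W ∩ Ioo p (p + ε)) ≠ ⊤ :=
    ne_top_of_le_ne_top hmFin (measure_mono (by rw [hunion]; exact subset_union_right))
  have hmeq : m = a + (volume (W ∩ Ioo p (p + ε))).toReal := by
    rw [hm, hunion, measure_union hdisj (hW.inter measurableSet_Ioo),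
      ENNReal.toReal_add haFin hcFin]
  have hcb : (volume (W ∩ Ioo p (p + ε))).toReal ≤ b := by
    apply ENNReal.toReal_mono (ne_top_of_le_ne_top (vol_fin W hright p)
      (measure_mono (inter_subset_inter_right _ Ioc_subset_Ioi_self)))
    exact measure_mono (inter_subset_inter_right _ Ioo_subset_Ioc_self)
  have hlow : ε / 2 ≤ m := by
    have : a ≤ m := by
      apply ENNReal.toReal_mono hmFin
      exact measure_mono (by rw [hunion]; exact subset_union_left)
    linarith
  have hhigh : m ≤ 3 * ε / 2 := by rw [hmeq]; linarith
  have h2ε : (0:ℝ) < 2 * ε := by linarith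
  constructor
  · rw [relMeasure, le_div_iff₀ h2ε]; linarith
  · rw [relMeasure, div_le_iff₀ h2ε]; linarith
end

section
/- Let I be a nonempty bounded open interval which is a finite union I = ⋃_{j=1}^n I_j of nonempty bounded open intervals I_j (not necessarily disjoint). Let 0 < δ < 1 and let B ⊆ ℝ be a measurable set such that λ(B ∩ I_j)/|I_j| ≥ 1−δ for every j = 1, …, n. Then λ(B ∩ I)/|I| ≥ (1−δ)/(1+δ). -/
open MeasureTheory Set

lemma ioo_disj_aux {a b a' b' : ℝ} (h : b ≤ a') :
    Disjoint (Ioo a b) (Ioo a' b') := by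
  apply Set.disjoint_left.mpr
  rintro x ⟨_, h1⟩ ⟨h2, _⟩
  linarith

lemma exists_two_families (u v : ℝ) (huv : u < v) (n : ℕ) (c d : Fin n → ℝ)
    (hcd : ∀ j, c j < d j) (hc : ∀ j, u ≤ c j) (hd : ∀ j, d j ≤ v)
    (hcov : Ioo u v ⊆ ⋃ j, Ioo (c j) (d j)) :
    ∃ ea fa : List (Fin n),
      ea.Pairwise (fun i i' => Disjoint (Ioo (c i) (d i)) (Ioo (c i') (d i'))) ∧
      fa.Pairwise (fun i i' => Disjoint (Ioo (c i) (d i)) (Ioo (c i') (d i'))) ∧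
      Ioo u v ⊆ (⋃ j ∈ ea, Ioo (c j) (d j)) ∪ (⋃ j ∈ fa, Ioo (c j) (d j)) := by
  have hn : 0 < n := by
    have hx : ((u+v)/2) ∈ ⋃ j, Ioo (c j) (d j) := hcov ⟨by linarith, by linarith⟩
    obtain ⟨j, -⟩ := Set.mem_iUnion.mp hx
    exact j.pos
  -- every admissible t has a candidate interval
  have hpt : ∀ t : ℝ, u ≤ t → t < v → ∃ j, (c j < t ∨ c j = u) ∧ t < d j := by
    intro t hut htv
    rcases eq_or_lt_of_le hut with rfl | hut'
    · -- t = u : find interval with left endpoint u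
      obtain ⟨j₀, -, hmin⟩ := Finset.univ.exists_min_image c ⟨⟨0, hn⟩, Finset.mem_univ _⟩
      have hcj : c j₀ = u := by
        by_contra hne
        have h1 : u < c j₀ := lt_of_le_of_ne (hc j₀) (Ne.symm hne)
        set z := (u + min (c j₀) v) / 2 with hz
        have hz1 : u < z := by
          have : u < min (c j₀) v := lt_min h1 huv
          simp only [hz]; linarith
        have hz2 : z < min (c j₀) v := by
          have : u < min (c j₀) v := lt_min h1 huv
          simp only [hz]; linarith
        have hzv : z < v := lt_of_lt_of_le hz2 (min_le_right _ _)
        obtain ⟨j, hj⟩ := Set.mem_iUnion.mp (hcov ⟨hz1, hzv⟩)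
        have : c j₀ ≤ c j := hmin j (Finset.mem_univ _)
        have : z < c j₀ := lt_of_lt_of_le hz2 (min_le_left _ _)
        exact absurd hj.1 (by linarith)
      exact ⟨j₀, Or.inr hcj, by rw [← hcj]; exact hcd j₀⟩
    · obtain ⟨j, hj⟩ := Set.mem_iUnion.mp (hcov ⟨hut', htv⟩)
      exact ⟨j, Or.inl hj.1, hj.2⟩
  -- main induction
  have main : ∀ k : ℕ, ∀ t : ℝ, u ≤ t → t < v →
      (Finset.univ.filter (fun j => t < d j)).card ≤ k →
      ∃ (j₁ : Fin n) (ea fa : List (Fin n)),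
        j₁ ∈ ea ∧ (c j₁ < t ∨ c j₁ = u) ∧ t < d j₁ ∧
        (∀ j, (c j < t ∨ c j = u) → d j ≤ d j₁) ∧
        (∀ j ∈ fa, d j₁ < d j) ∧
        (∀ j ∈ ea, t < d j) ∧ (∀ j ∈ fa, t < d j) ∧
        ea.Pairwise (fun i i' => Disjoint (Ioo (c i) (d i)) (Ioo (c i') (d i'))) ∧
        fa.Pairwise (fun i i' => Disjoint (Ioo (c i) (d i)) (Ioo (c i') (d i'))) ∧
        Ioo t v ⊆ (⋃ j ∈ ea, Ioo (c j) (d j)) ∪ (⋃ j ∈ fa, Ioo (c j) (d j)) := by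
    intro k
    induction k with
    | zero =>
      intro t hut htv hcard
      obtain ⟨j, -, hj2⟩ := hpt t hut htv
      have : j ∈ Finset.univ.filter (fun j => t < d j) := by
        simp only [Finset.mem_filter, Finset.mem_univ, true_and]; exact hj2
      have : 0 < (Finset.univ.filter (fun j => t < d j)).card := Finset.card_pos.mpr ⟨j, this⟩
      omega
    | succ k ih =>
      intro t hut htv hcard
      set S := Finset.univ.filter (fun j => c j < t ∨ c j = u) with hS
      obtain ⟨jw, hjw1, hjw2⟩ := hpt t hut htv
      have hSne : S.Nonempty := ⟨jw, by simp only [hS, Finset.mem_filter, Finset.mem_univ, true_and]; exact hjw1⟩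
      obtain ⟨j₁, hj₁S, hj₁max⟩ := S.exists_max_image d hSne
      have hj₁S' : c j₁ < t ∨ c j₁ = u := by
        simpa only [hS, Finset.mem_filter, Finset.mem_univ, true_and] using hj₁S
      have hmax : ∀ j, (c j < t ∨ c j = u) → d j ≤ d j₁ := by
        intro j hj
        exact hj₁max j (by simp only [hS, Finset.mem_filter, Finset.mem_univ, true_and]; exact hj)
      have htd1 : t < d j₁ := lt_of_lt_of_le hjw2 (hmax jw hjw1)
      have hc1t : c j₁ ≤ t := by
        rcases hj₁S' with h | h
        · exact h.le
        · rw [h]; exact hut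
      rcases eq_or_lt_of_le (hd j₁) with hdv | hdv
      · -- d j₁ = v, single interval finishes
        refine ⟨j₁, [j₁], [], List.mem_singleton.mpr rfl, hj₁S', htd1, hmax,
          by simp, by simpa using htd1, by simp, List.pairwise_singleton _ _, List.Pairwise.nil, ?_⟩
        intro x hx
        left
        simp only [List.mem_singleton, Set.mem_iUnion, Set.mem_Ioo]
        exact ⟨j₁, rfl, lt_of_le_of_lt hc1t hx.1, hdv ▸ hx.2⟩
      · -- recurse at t' = d j₁
        set t' := d j₁ with ht'
        have hut' : u ≤ t' := le_trans hut htd1.le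
        have hcard' : (Finset.univ.filter (fun j => t' < d j)).card ≤ k := by
          have hsub : (Finset.univ.filter (fun j => t' < d j)) ⊆ (Finset.univ.filter (fun j => t < d j)) := by
            intro j hj
            simp only [Finset.mem_filter, Finset.mem_univ, true_and] at hj ⊢
            exact lt_trans htd1 hj
          have hmem : j₁ ∈ Finset.univ.filter (fun j => t < d j) := by
            simp only [Finset.mem_filter, Finset.mem_univ, true_and]; exact htd1
          have hnmem : j₁ ∉ Finset.univ.filter (fun j => t' < d j) := by
            simp only [Finset.mem_filter, Finset.mem_univ, true_and]
            exact lt_irrefl _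
          have : (Finset.univ.filter (fun j => t' < d j)).card < (Finset.univ.filter (fun j => t < d j)).card :=
            Finset.card_lt_card ((Finset.ssubset_iff_of_subset hsub).mpr ⟨j₁, hmem, hnmem⟩)
          omega
        obtain ⟨j₂, ea₂, fa₂, hj₂mem, hj₂head, hj₂d, hmax₂, hfa₂d, hea₂t, hfa₂t, hea₂p, hfa₂p, hcov₂⟩ :=
          ih t' hut' hdv hcard'
        have hut'' : u < t' := lt_of_le_of_lt hut htd1
        have hcj₂ : c j₂ < t' := by
          rcases hj₂head with h | h
          · exact h
          · rw [h]; exact hut''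
        refine ⟨j₁, j₁ :: fa₂, ea₂, List.mem_cons_self, hj₁S', htd1, hmax, ?_, ?_, ?_, ?_, ?_, ?_⟩
        · -- ∀ j ∈ ea₂, d j₁ < d j
          intro j hj; exact hea₂t j hj
        · -- ∀ j ∈ j₁ :: fa₂, t < d j
          intro j hj
          rcases List.mem_cons.mp hj with rfl | hj
          · exact htd1
          · exact lt_trans htd1 (hfa₂t j hj)
        · intro j hj; exact lt_trans htd1 (hea₂t j hj)
        · -- pairwise (j₁ :: fa₂)
          refine List.Pairwise.cons ?_ hfa₂p
          intro j hj
          have hdj : d j₂ < d j := hfa₂d j hj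
          have hcj : t' ≤ c j := by
            by_contra hlt
            push_neg at hlt
            exact absurd (hmax₂ j (Or.inl hlt)) (not_le.mpr hdj)
          exact ioo_disj_aux hcj
        · exact hea₂p
        · -- coverage
          intro x hx
          rcases lt_trichotomy x t' with hxt | hxt | hxt
          · left
            simp only [List.mem_cons, Set.mem_iUnion, Set.mem_Ioo]
            exact ⟨j₁, Or.inl rfl, lt_of_le_of_lt hc1t hx.1, hxt⟩
          · right
            simp only [Set.mem_iUnion, Set.mem_Ioo]
            exact ⟨j₂, hj₂mem, by rw [hxt]; exact hcj₂, by rw [hxt]; exact hj₂d⟩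
          · rcases hcov₂ ⟨hxt, hx.2⟩ with h | h
            · right; exact h
            · left
              simp only [Set.mem_iUnion, Set.mem_Ioo] at h ⊢
              obtain ⟨j, hj1, hj2⟩ := h
              exact ⟨j, List.mem_cons_of_mem _ hj1, hj2⟩
  obtain ⟨j₁, ea, fa, -, -, -, -, -, -, -, hp1, hp2, hcov'⟩ :=
    main n u le_rfl huv (le_trans (Finset.card_filter_le _ _) (by simp))
  exact ⟨ea, fa, hp1, hp2, hcov'⟩

/-- If a nonempty bounded open interval `(u, v)` is a finite (not necessarily disjoint) union
of nonempty bounded open intervals `(c j, d j)`, `0 < δ < 1`, and `B` is a measurable set with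
relative measure at least `1 - δ` in each `(c j, d j)`, then the relative measure of `B` in
`(u, v)` is at least `(1 - δ)/(1 + δ)`. -/
theorem relMeasure_union_of_intervals (u v : ℝ) (huv : u < v)
    (n : ℕ) (hn : 0 < n) (c d : Fin n → ℝ) (hcd : ∀ j, c j < d j)
    (hcover : Ioo u v = ⋃ j, Ioo (c j) (d j))
    (δ : ℝ) (hδ0 : 0 < δ) (hδ1 : δ < 1)
    (B : Set ℝ) (hB : MeasurableSet B)
    (hBj : ∀ j, 1 - δ ≤ (volume (B ∩ Ioo (c j) (d j))).toReal / (d j - c j)) :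
    (1 - δ) / (1 + δ) ≤ (volume (B ∩ Ioo u v)).toReal / (v - u) := by
  have hsub : ∀ j, Ioo (c j) (d j) ⊆ Ioo u v := by
    intro j; rw [hcover]; exact Set.subset_iUnion (fun j => Ioo (c j) (d j)) j
  have hc : ∀ j, u ≤ c j := fun j => ((Set.Ioo_subset_Ioo_iff (hcd j)).mp (hsub j)).1
  have hd : ∀ j, d j ≤ v := fun j => ((Set.Ioo_subset_Ioo_iff (hcd j)).mp (hsub j)).2
  obtain ⟨ea, fa, hp1, hp2, hcov'⟩ :=
    exists_two_families u v huv n c d hcd hc hd (le_of_eq hcover)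
  -- move to finsets
  set SA := ea.toFinset with hSA
  set SE := fa.toFinset with hSE
  set A := ⋃ j ∈ SA, Ioo (c j) (d j) with hA
  set E := ⋃ j ∈ SE, Ioo (c j) (d j) with hE
  have hAm : MeasurableSet A := SA.measurableSet_biUnion (fun j _ => measurableSet_Ioo)
  have hEm : MeasurableSet E := SE.measurableSet_biUnion (fun j _ => measurableSet_Ioo)
  have hAsub : A ⊆ Ioo u v := Set.iUnion₂_subset (fun j _ => hsub j)
  have hEsub : E ⊆ Ioo u v := Set.iUnion₂_subset (fun j _ => hsub j)
  have hAEeq : A ∪ E = Ioo u v := by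
    apply Set.Subset.antisymm (Set.union_subset hAsub hEsub)
    intro x hx
    rcases hcov' hx with h | h
    · left; simpa [hA, hSA, List.mem_toFinset] using h
    · right; simpa [hE, hSE, List.mem_toFinset] using h
  have hdisjA : (↑SA : Set (Fin n)).PairwiseDisjoint (fun j => Ioo (c j) (d j)) := by
    intro i hi i' hi' hne
    haveI : Std.Symm (fun i i' : Fin n => Disjoint (Ioo (c i) (d i)) (Ioo (c i') (d i'))) :=
      ⟨fun a b h => h.symm⟩
    exact List.Pairwise.forall hp1
      (List.mem_toFinset.mp hi) (List.mem_toFinset.mp hi') hne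
  have hdisjE : (↑SE : Set (Fin n)).PairwiseDisjoint (fun j => Ioo (c j) (d j)) := by
    intro i hi i' hi' hne
    haveI : Std.Symm (fun i i' : Fin n => Disjoint (Ioo (c i) (d i)) (Ioo (c i') (d i'))) :=
      ⟨fun a b h => h.symm⟩
    exact List.Pairwise.forall hp2
      (List.mem_toFinset.mp hi) (List.mem_toFinset.mp hi') hne
  -- finiteness
  have hfin : ∀ S : Set ℝ, S ⊆ Ioo u v → volume S ≠ ⊤ := by
    intro S hS
    refine ne_top_of_le_ne_top ?_ (measure_mono hS)
    rw [Real.volume_Ioo]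
    exact ENNReal.ofReal_ne_top
  -- measure of A and B ∩ A as sums
  have hmeasA : volume A = ∑ j ∈ SA, volume (Ioo (c j) (d j)) :=
    measure_biUnion_finset hdisjA (fun j _ => measurableSet_Ioo)
  have hmeasE : volume E = ∑ j ∈ SE, volume (Ioo (c j) (d j)) :=
    measure_biUnion_finset hdisjE (fun j _ => measurableSet_Ioo)
  have hBA : B ∩ A = ⋃ j ∈ SA, (B ∩ Ioo (c j) (d j)) := by
    rw [hA, Set.inter_iUnion₂]
  have hBE : B ∩ E = ⋃ j ∈ SE, (B ∩ Ioo (c j) (d j)) := by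
    rw [hE, Set.inter_iUnion₂]
  have hmeasBA : volume (B ∩ A) = ∑ j ∈ SA, volume (B ∩ Ioo (c j) (d j)) := by
    rw [hBA]
    exact measure_biUnion_finset (hdisjA.mono_on (fun j _ => Set.inter_subset_right))
      (fun j _ => hB.inter measurableSet_Ioo)
  have hmeasBE : volume (B ∩ E) = ∑ j ∈ SE, volume (B ∩ Ioo (c j) (d j)) := by
    rw [hBE]
    exact measure_biUnion_finset (hdisjE.mono_on (fun j _ => Set.inter_subset_right))
      (fun j _ => hB.inter measurableSet_Ioo)
  -- real quantities
  set m := (volume (B ∩ Ioo u v)).toReal with hm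
  set a := (volume (B ∩ A)).toReal with ha
  set b := (volume (B ∩ E)).toReal with hb
  set s := (volume (B ∩ (A ∩ E))).toReal with hs
  set LA := (volume A).toReal with hLA
  set LE := (volume E).toReal with hLE
  set t := (volume (A ∩ E)).toReal with ht
  -- key per-interval bound
  have hkey : ∀ j, (1 - δ) * (d j - c j) ≤ (volume (B ∩ Ioo (c j) (d j))).toReal := by
    intro j
    have hp : (0:ℝ) < d j - c j := by linarith [hcd j]
    exact (le_div_iff₀ hp).mp (hBj j)
  have hf3A : (1 - δ) * LA ≤ a := by
    rw [hLA, ha, hmeasA, hmeasBA, ENNReal.toReal_sum (fun j _ => hfin _ (hsub j)),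
      ENNReal.toReal_sum (fun j _ => hfin _ (le_trans Set.inter_subset_right (hsub j) : B ∩ Ioo (c j) (d j) ⊆ Ioo u v))]
    rw [Finset.mul_sum]
    apply Finset.sum_le_sum
    intro j _
    rw [Real.volume_Ioo, ENNReal.toReal_ofReal (by linarith [hcd j])]
    exact hkey j
  have hf3E : (1 - δ) * LE ≤ b := by
    rw [hLE, hb, hmeasE, hmeasBE, ENNReal.toReal_sum (fun j _ => hfin _ (hsub j)),
      ENNReal.toReal_sum (fun j _ => hfin _ (le_trans Set.inter_subset_right (hsub j) : B ∩ Ioo (c j) (d j) ⊆ Ioo u v))]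
    rw [Finset.mul_sum]
    apply Finset.sum_le_sum
    intro j _
    rw [Real.volume_Ioo, ENNReal.toReal_ofReal (by linarith [hcd j])]
    exact hkey j
  -- inclusion-exclusion for B∩A, B∩E
  have hie1 : a + b = m + s := by
    have e1 : volume ((B ∩ A) ∪ (B ∩ E)) + volume ((B ∩ A) ∩ (B ∩ E)) =
        volume (B ∩ A) + volume (B ∩ E) := measure_union_add_inter _ (hB.inter hEm)
    have e2 : (B ∩ A) ∪ (B ∩ E) = B ∩ Ioo u v := by rw [← Set.inter_union_distrib_left, hAEeq]
    have e3 : (B ∩ A) ∩ (B ∩ E) = B ∩ (A ∩ E) := by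
      ext x; simp only [Set.mem_inter_iff]; tauto
    rw [e2, e3] at e1
    have := congrArg ENNReal.toReal e1
    rw [ENNReal.toReal_add (hfin _ Set.inter_subset_right)
        (hfin _ (le_trans Set.inter_subset_right (le_trans Set.inter_subset_left hAsub))),
      ENNReal.toReal_add (hfin _ (le_trans Set.inter_subset_right hAsub))
        (hfin _ (le_trans Set.inter_subset_right hEsub))] at this
    linarith [this]
  have hie2 : LA + LE = (v - u) + t := by
    have e1 : volume (A ∪ E) + volume (A ∩ E) = volume A + volume E :=
      measure_union_add_inter _ hEm
    rw [hAEeq] at e1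
    have := congrArg ENNReal.toReal e1
    rw [ENNReal.toReal_add (by rw [Real.volume_Ioo]; exact ENNReal.ofReal_ne_top)
        (hfin _ (le_trans Set.inter_subset_left hAsub)),
      ENNReal.toReal_add (hfin _ hAsub) (hfin _ hEsub),
      Real.volume_Ioo, ENNReal.toReal_ofReal (by linarith)] at this
    linarith [this]
  have hsm : s ≤ m := by
    apply ENNReal.toReal_mono (hfin _ Set.inter_subset_right)
    exact measure_mono (Set.inter_subset_inter_right B (le_trans Set.inter_subset_left hAsub))
  have hst : s ≤ t := by
    apply ENNReal.toReal_mono (hfin _ (le_trans Set.inter_subset_left hAsub))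
    exact measure_mono Set.inter_subset_right
  have hs0 : 0 ≤ s := ENNReal.toReal_nonneg
  have hm0 : 0 ≤ m := ENNReal.toReal_nonneg
  -- final algebra
  have hfinal : (1 - δ) * (v - u) ≤ (1 + δ) * m := by
    nlinarith [mul_le_mul_of_nonneg_left hst (by linarith : (0:ℝ) ≤ 1 - δ),
      mul_le_mul_of_nonneg_left hsm hδ0.le]
  rw [div_le_div_iff₀ (by linarith) (by linarith)]
  linarith [hfinal]
end

section
/- Let I be a nonempty interval contained in the union of a finite family of intervals J_1, …, J_n with the property that for any two members J_i, J_k of the family, either J_i ∩ J_k = ∅, or J_i ⊆ J_k, or J_k ⊆ J_i. Then I is contained in one of the intervals J_1, …, J_n. -/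
open Set

/-- If a nonempty interval `I` is contained in the union of a finite family of (open)
intervals such that any two members of the family are either disjoint or one contains
the other, then `I` is contained in one of the members of the family. -/
theorem subset_of_mem_of_laminar_cover (I : Set ℝ) (hI : I.OrdConnected) (hne : I.Nonempty)
    (n : ℕ) (J : Fin n → Set ℝ)
    (hJint : ∀ i, (J i).OrdConnected) (hJopen : ∀ i, IsOpen (J i))
    (hlam : ∀ i k, J i ∩ J k = ∅ ∨ J i ⊆ J k ∨ J k ⊆ J i)
    (hcover : I ⊆ ⋃ i, J i) :
    ∃ i, I ⊆ J i := by
  classical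
  obtain ⟨x, hx⟩ := hne
  obtain ⟨i0, hi0⟩ := mem_iUnion.mp (hcover hx)
  set s : Finset (Fin n) := Finset.univ.filter (fun k => x ∈ J k) with hs
  have hsne : (s.image J).Nonempty :=
    ⟨J i0, Finset.mem_image.mpr ⟨i0, by simp [hs, hi0], rfl⟩⟩
  obtain ⟨A, hA, hAmax⟩ : ∃ A ∈ s.image J, ∀ B ∈ s.image J, ¬ A < B := by
    obtain ⟨A, hA⟩ := Finset.exists_maximal hsne
    exact ⟨A, hA.1, fun B hB hlt => (lt_irrefl A) (lt_of_lt_of_le hlt (hA.2 hB hlt.le))⟩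
  obtain ⟨i, his, hiA⟩ := Finset.mem_image.mp hA
  have hxi : x ∈ J i := by
    have := Finset.mem_filter.mp his
    exact this.2
  -- key: every member is either inside J i or disjoint from J i
  have key : ∀ k, J k ⊆ J i ∨ J k ∩ J i = ∅ := by
    intro k
    rcases hlam k i with h | h | h
    · exact Or.inr h
    · -- J k ⊆ J i
      exact Or.inl h
    · -- J i ⊆ J k : then x ∈ J k, so by maximality J k = J i
      have hxk : x ∈ J k := h hxi
      have hkmem : J k ∈ s.image J :=
        Finset.mem_image.mpr ⟨k, by simp [hs, hxk], rfl⟩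
      have hnot := hAmax (J k) hkmem
      rw [← hiA] at hnot
      by_cases heq : J i = J k
      · exact Or.inl (heq ▸ subset_rfl)
      · exact absurd (lt_of_le_of_ne h heq) hnot
  -- U : union of members disjoint from J i
  set U : Set ℝ := ⋃ k ∈ {k : Fin n | J k ∩ J i = ∅}, J k with hU
  have hUopen : IsOpen U := isOpen_biUnion fun k _ => hJopen k
  have hcov2 : I ⊆ J i ∪ U := by
    intro y hy
    obtain ⟨k, hk⟩ := mem_iUnion.mp (hcover hy)
    rcases key k with h | h
    · exact Or.inl (h hk)
    · exact Or.inr (mem_biUnion h hk)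
  have hdisj : J i ∩ U = ∅ := by
    ext z
    simp only [mem_inter_iff, mem_empty_iff_false, iff_false, not_and]
    intro hzi hzU
    obtain ⟨k, hk, hzk⟩ := mem_iUnion₂.mp hzU
    have : z ∈ J k ∩ J i := ⟨hzk, hzi⟩
    rw [hk] at this
    exact this
  refine ⟨i, ?_⟩
  by_contra hnot
  obtain ⟨y, hyI, hyi⟩ := not_subset.mp hnot
  have hyU : y ∈ U := (hcov2 hyI).resolve_left hyi
  have hpre : IsPreconnected I := isPreconnected_iff_ordConnected.mpr hI
  obtain ⟨z, hzI, hzi, hzU⟩ :=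
    hpre (J i) U (hJopen i) hUopen hcov2 ⟨x, hx, hxi⟩ ⟨y, hyI, hyU⟩
  have : z ∈ J i ∩ U := ⟨hzi, hzU⟩
  rw [hdisj] at this
  exact this
end
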